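/- Let ι be a nonempty finite index type, a, v : ι → ℝ with a_i ≠ 0 and v_i ≠ 0 for all i, and X > 0 a real number. Set S = Σ_{k∈ι} |a_k| · |v_k| and define G*_i = (X / |v_i|) · (|a_i| / S) for each i. Then G*_i > 0 for all i, the resource constraint Σ_{i∈ι} G*_i · v_i² = X holds, and Σ_{i∈ι} 2 · a_i² / G*_i = 2S² / X. -/

import Mathlib

/-! Writing `G*_i = (X / S) · |a_i| / |v_i|`, both `G*_i v_i²` and `a_i² / G*_i` are constant multiples
of the weight `|a_i| |v_i|`, whose total is `S`; the constants `X / S` and `S / X` give the two identities. -/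

open Finset

section AbsRatio

variable {ι : Type*} [Fintype ι] {a v : ι → ℝ}

lemma sum_abs_mul_abs_pos [Nonempty ι] (ha : ∀ i, a i ≠ 0) (hv : ∀ i, v i ≠ 0) :
    0 < ∑ i, |a i| * |v i| :=
  sum_pos (fun i _ => mul_pos (abs_pos.2 (ha i)) (abs_pos.2 (hv i))) univ_nonempty

lemma sum_mul_abs_div_abs_mul_sq (hv : ∀ i, v i ≠ 0) (c : ℝ) :
    ∑ i, c * (|a i| / |v i|) * v i ^ 2 = c * ∑ i, |a i| * |v i| := by
  rw [mul_sum]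
  refine sum_congr rfl fun i _ => ?_
  have hvi : |v i| ≠ 0 := abs_ne_zero.2 (hv i)
  rw [← sq_abs (v i)]
  field_simp

lemma sum_sq_div_mul_abs_div_abs (ha : ∀ i, a i ≠ 0) (hv : ∀ i, v i ≠ 0) {c : ℝ} (hc : c ≠ 0) :
    ∑ i, a i ^ 2 / (c * (|a i| / |v i|)) = (∑ i, |a i| * |v i|) / c := by
  rw [sum_div]
  refine sum_congr rfl fun i _ => ?_
  have hai : |a i| ≠ 0 := abs_ne_zero.2 (ha i)
  have hvi : |v i| ≠ 0 := abs_ne_zero.2 (hv i)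
  rw [← sq_abs (a i)]
  field_simp

end AbsRatio

/-- Optimal switch sizing formula (FSL). -/
theorem fsl_optimal_sizing (ι : Type*) [Fintype ι] [Nonempty ι]
    (a v : ι → ℝ) (ha : ∀ i, a i ≠ 0) (hv : ∀ i, v i ≠ 0)
    (X : ℝ) (hX : X > 0) :
    let S := ∑ k, |a k| * |v k|
    let Gstar : ι → ℝ := fun i => (X / |v i|) * (|a i| / S)
    (∀ i, Gstar i > 0) ∧
      ∑ i, Gstar i * v i ^ 2 = X ∧
      ∑ i, 2 * a i ^ 2 / Gstar i = 2 * S ^ 2 / X := by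
  intro S Gstar
  have hS : 0 < S := sum_abs_mul_abs_pos ha hv
  have hGstar : Gstar = fun i => X / S * (|a i| / |v i|) := by
    funext i
    simp only [Gstar]
    ring
  have hXS : X / S ≠ 0 := (div_pos hX hS).ne'
  refine ⟨fun i => ?_, ?_, ?_⟩
  · rw [hGstar]
    exact mul_pos (div_pos hX hS) (div_pos (abs_pos.2 (ha i)) (abs_pos.2 (hv i)))
  · rw [hGstar, sum_mul_abs_div_abs_mul_sq hv]
    exact div_mul_cancel₀ X hS.ne'
  · simp_rw [hGstar, mul_div_assoc, ← mul_sum, sum_sq_div_mul_abs_div_abs ha hv hXS]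
    change 2 * (S / (X / S)) = 2 * (S ^ 2 / X)
    field_simp
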